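/- arXiv:1212.1321 — 5 statements merged into one kernel-verified Lean document; each statement's English description precedes it below -/
import Mathlib

section
/- The Jacobson radical of a finite dimensional associative algebra over a field of characteristic 0 is invariant under every derivation of the algebra. -/
/-!
The radical `J` of a finite dimensional algebra is nilpotent, say `J ^ n = 0`. For `b ∈ J` the
Leibniz rule gives `Dⁿ (bⁿ) ≡ n! • (D b)ⁿ` modulo `J`, because every other term keeps an
undifferentiated factor `b` or differentiates some `bᵐ` fewer than `m` times. Since `bⁿ = 0` and
`n!` is invertible in characteristic `0`, `(D b)ⁿ ∈ J`. For `a ∈ J` and any `y`,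
`y * D a ≡ D (y * a)` modulo `J`, so `(y * D a)ⁿ ∈ J`; hence every `y * D a` is nilpotent, which
forces `D a ∈ J`.
-/

open Finset

section Leibniz

variable {R A : Type*} [CommSemiring R] [Semiring A] [Algebra R A]
  (D : A →ₗ[R] A) (hD : ∀ a b : A, D (a * b) = D a * b + a * D b)
include hD

theorem iterate_apply_mul (n : ℕ) (a b : A) :
    D^[n] (a * b) = ∑ ij ∈ antidiagonal n, n.choose ij.1 • (D^[ij.1] a * D^[ij.2] b) := by
  induction n with
  | zero => simp
  | succ n ih =>
    rw [sum_antidiagonal_choose_succ_nsmul (fun i j => D^[i] a * D^[j] b) n]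
    simp only [Function.iterate_succ_apply', ih, map_sum, map_nsmul, hD, smul_add,
      sum_add_distrib]
    rw [add_comm]
    refine congrArg₂ (· + ·) rfl (sum_congr rfl fun ij hij ↦ ?_)
    rw [n.choose_symm_of_eq_add (HasAntidiagonal.mem_antidiagonal.1 hij).symm]

end Leibniz

section TwoSidedIdeal

variable {R A : Type*} [CommSemiring R] [Ring A] [Algebra R A]
  (D : A →ₗ[R] A) (hD : ∀ a b : A, D (a * b) = D a * b + a * D b)
  {I : Ideal A} [I.IsTwoSided] {b : A}
include hD

theorem iterate_apply_pow_mem_of_lt (hb : b ∈ I) {k m : ℕ} (hkm : k < m) :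
    D^[k] (b ^ m) ∈ I := by
  induction m generalizing k with
  | zero => omega
  | succ m ih =>
    rw [pow_succ', iterate_apply_mul D hD]
    refine sum_mem fun ij hij ↦ nsmul_mem ?_ _
    rw [HasAntidiagonal.mem_antidiagonal] at hij
    rcases Nat.eq_zero_or_pos ij.1 with h0 | hpos
    · rw [h0]
      exact I.mul_mem_right _ hb
    · exact I.mul_mem_left _ (ih (by omega))

theorem mk_iterate_apply_pow_self (hb : b ∈ I) (m : ℕ) :
    Ideal.Quotient.mk I (D^[m] (b ^ m)) = m.factorial • Ideal.Quotient.mk I (D b) ^ m := by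
  induction m with
  | zero => simp
  | succ m ih =>
    rw [pow_succ', iterate_apply_mul D hD, map_sum,
      sum_eq_single_of_mem (1, m) (by simp [add_comm]) ?_]
    · simp only [map_nsmul, map_mul, Function.iterate_one, ih, Nat.choose_one_right,
        Nat.factorial_succ, mul_smul, mul_smul_comm, pow_succ']
    · rintro ⟨i, j⟩ hij hne
      rw [HasAntidiagonal.mem_antidiagonal] at hij
      rw [map_nsmul, map_mul, smul_eq_zero_of_right]
      rcases Nat.eq_zero_or_pos i with rfl | hi
      · simp [Ideal.Quotient.eq_zero_iff_mem.2 hb]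
      · have hj : j < m := by
          by_contra
          exact hne (Prod.ext (by omega) (by omega))
        simp [Ideal.Quotient.eq_zero_iff_mem.2 (iterate_apply_pow_mem_of_lt D hD hb hj)]

end TwoSidedIdeal

theorem pow_apply_mem_of_pow_eq_zero {F A : Type*} [Field F] [CharZero F] [Ring A] [Algebra F A]
    (D : A →ₗ[F] A) (hD : ∀ a b : A, D (a * b) = D a * b + a * D b)
    {I : Ideal A} [I.IsTwoSided] {b : A} (hb : b ∈ I) {m : ℕ} (hbm : b ^ m = 0) :
    D b ^ m ∈ I := by
  have h := mk_iterate_apply_pow_self D hD hb m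
  rw [hbm, iterate_map_zero, map_zero, eq_comm, ← Nat.cast_smul_eq_nsmul F, smul_eq_zero] at h
  rw [← Ideal.Quotient.eq_zero_iff_mem, map_pow]
  exact h.resolve_left (Nat.cast_ne_zero.2 m.factorial_ne_zero)

theorem Ideal.mem_jacobson_bot_of_forall_isNilpotent_mul {A : Type*} [Ring A] {x : A}
    (h : ∀ y, IsNilpotent (y * x)) : x ∈ Ideal.jacobson ⊥ := by
  refine Ideal.mem_jacobson_iff.2 fun y ↦ ?_
  obtain ⟨u, hu⟩ := (h y).isUnit_add_one
  refine ⟨↑u⁻¹, ?_⟩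
  rw [Ideal.mem_bot, sub_eq_zero, mul_assoc, ← mul_add_one, ← hu, u.inv_mul]

/-- the Jacobson radical of a finite dimensional associative
algebra over a field of characteristic `0` is invariant under every
derivation. -/
theorem stmt1 {F A : Type*} [Field F] [CharZero F] [Ring A] [Algebra F A]
    [FiniteDimensional F A]
    (D : A →ₗ[F] A) (hD : ∀ a b : A, D (a * b) = D a * b + a * D b) :
    ∀ a ∈ Ideal.jacobson (⊥ : Ideal A), D a ∈ Ideal.jacobson (⊥ : Ideal A) := by
  have := IsArtinianRing.of_finite F A
  obtain ⟨n, hn⟩ := IsArtinianRing.isNilpotent_jacobson_bot (R := A)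
  set J := Ideal.jacobson (⊥ : Ideal A)
  have pow_eq_zero {b : A} (hb : b ∈ J) : b ^ n = 0 := by
    simpa [hn] using Ideal.pow_mem_pow hb n
  intro a ha
  refine Ideal.mem_jacobson_bot_of_forall_isNilpotent_mul fun y ↦ ?_
  have hya : y * a ∈ J := J.mul_mem_left y ha
  have hcongr : Ideal.Quotient.mk J (y * D a) = Ideal.Quotient.mk J (D (y * a)) := by
    rw [hD, map_add, Ideal.Quotient.eq_zero_iff_mem.2 (J.mul_mem_left (D y) ha), zero_add]
  have hpow : (y * D a) ^ n ∈ J := by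
    rw [← Ideal.Quotient.eq_zero_iff_mem, map_pow, hcongr, ← map_pow,
      Ideal.Quotient.eq_zero_iff_mem]
    exact pow_apply_mem_of_pow_eq_zero D hD hya (pow_eq_zero hya)
  exact ⟨n * n, by rw [pow_mul, pow_eq_zero hpow]⟩
end

section
/- Let A be the algebra of matrices [[C,D],[0,0]] (C, D ∈ M_m(F)) and φ the automorphism of A sending [[C,D],[0,0]] to [[C, C+D],[0,0]]. Then there is no maximal semisimple subalgebra B of A with A = B ⊕ J(A) (as vector spaces) and φ(B) = B; i.e., A admits no φ-invariant Wedderburn–Malcev decomposition. -/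
open Matrix

/-- The (non-unital) algebra of `2m × 2m` matrices of block form
`[[C, D], [0, 0]]` with `C, D ∈ M_m(F)`. -/
def blockAlg (F : Type*) [Field F] (m : ℕ) :
    NonUnitalSubalgebra F (Matrix (Fin m ⊕ Fin m) (Fin m ⊕ Fin m) F) where
  carrier := {x | ∃ C D : Matrix (Fin m) (Fin m) F, x = Matrix.fromBlocks C D 0 0}
  add_mem' := by
    rintro x y ⟨C, D, rfl⟩ ⟨C', D', rfl⟩
    exact ⟨C + C', D + D', by simp [Matrix.fromBlocks_add]⟩
  zero_mem' := ⟨0, 0, by simp⟩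
  mul_mem' := by
    rintro x y ⟨C, D, rfl⟩ ⟨C', D', rfl⟩
    exact ⟨C * C', C * D', by simp [Matrix.fromBlocks_multiply]⟩
  smul_mem' := by
    rintro c x ⟨C, D, rfl⟩
    exact ⟨c • C, c • D, by simp [Matrix.fromBlocks_smul]⟩

/-- The Jacobson radical `J(A) = {[[0, D], [0, 0]]}` of `blockAlg F m`,
as a subspace. -/
def radJ (F : Type*) [Field F] (m : ℕ) : Submodule F ↥(blockAlg F m) where
  carrier := {x | ∃ D : Matrix (Fin m) (Fin m) F, x.val = Matrix.fromBlocks 0 D 0 0}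
  add_mem' := by
    rintro x y ⟨D, hD⟩ ⟨D', hD'⟩
    exact ⟨D + D', by
      show x.val + y.val = _
      rw [hD, hD']; simp [Matrix.fromBlocks_add]⟩
  zero_mem' := ⟨0, by simp⟩
  smul_mem' := by
    rintro c x ⟨D, hD⟩
    exact ⟨c • D, by
      show c • x.val = _
      rw [hD]; simp [Matrix.fromBlocks_smul]⟩

/-- The automorphism `φ([[C, D], [0, 0]]) = [[C, C + D], [0, 0]]` of
`blockAlg F m`. -/
def phiBlock (F : Type*) [Field F] (m : ℕ) (x : ↥(blockAlg F m)) : ↥(blockAlg F m) :=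
  ⟨x.val + x.val * Matrix.fromBlocks 0 1 0 0, by
    obtain ⟨C, D, hx⟩ := x.2
    exact ⟨C, D + C, by
      rw [hx]; simp [Matrix.fromBlocks_multiply, Matrix.fromBlocks_add]⟩⟩

/-!
`φ - id` maps `A` into `J(A)`, since `φ(x) - x = x · [[0, 1], [0, 0]]`. Hence for a
`φ`-invariant complement `B` of `J(A)`, `φ(b) - b` lies in `B ∩ J(A) = 0`, so `φ` fixes `B`
pointwise. But a fixed point `[[C, D], [0, 0]]` of `φ` has `C = 0`, i.e. lies in `J(A)`;
thus `B ⊆ J(A)`, contradicting `B + J(A) = A`.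
-/

theorem Submodule.eq_of_sub_mem_of_disjoint {R M : Type*} [Ring R] [AddCommGroup M]
    [Module R M] {B J : Submodule R M} (hBJ : Disjoint B J) {f : M → M}
    (hfB : ∀ b ∈ B, f b ∈ B) (hfJ : ∀ x, f x - x ∈ J) {b : M} (hb : b ∈ B) : f b = b :=
  sub_eq_zero.mp <| (Submodule.disjoint_def.mp hBJ) _ (sub_mem (hfB b hb) hb) (hfJ b)

section

variable {F : Type*} [Field F] {m : ℕ}

theorem mem_radJ_iff (x : ↥(blockAlg F m)) : x ∈ radJ F m ↔ x.val.toBlocks₁₁ = 0 := by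
  constructor
  · rintro ⟨D, hD⟩
    rw [hD, toBlocks_fromBlocks₁₁]
  · intro hC
    obtain ⟨C, D, hx⟩ := x.2
    rw [hx, toBlocks_fromBlocks₁₁] at hC
    exact ⟨D, by rw [hx, hC]⟩

theorem phiBlock_val {x : ↥(blockAlg F m)} {C D : Matrix (Fin m) (Fin m) F}
    (hx : x.val = fromBlocks C D 0 0) : (phiBlock F m x).val = fromBlocks C (D + C) 0 0 := by
  simp [phiBlock, hx, fromBlocks_multiply, fromBlocks_add]

theorem phiBlock_sub_mem_radJ (x : ↥(blockAlg F m)) : phiBlock F m x - x ∈ radJ F m := by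
  obtain ⟨C, D, hx⟩ := x.2
  rw [mem_radJ_iff, NonUnitalSubalgebra.coe_sub, phiBlock_val hx, hx]
  ext i j
  simp [toBlocks₁₁]

theorem mem_radJ_of_phiBlock_eq {x : ↥(blockAlg F m)} (hx : phiBlock F m x = x) :
    x ∈ radJ F m := by
  obtain ⟨C, D, hCD⟩ := x.2
  have hval := congrArg (fun y : ↥(blockAlg F m) => y.val.toBlocks₁₂) hx
  simp only [phiBlock_val hCD, hCD, toBlocks_fromBlocks₁₂, add_eq_left] at hval
  rw [mem_radJ_iff, hCD, toBlocks_fromBlocks₁₁, hval]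

theorem radJ_ne_top (hm : 0 < m) : radJ F m ≠ ⊤ := by
  intro htop
  have hmem := (mem_radJ_iff (F := F) ⟨fromBlocks 1 0 0 0, 1, 0, rfl⟩).mp
    (Submodule.eq_top_iff'.mp htop _)
  rw [toBlocks_fromBlocks₁₁] at hmem
  have : Nonempty (Fin m) := ⟨⟨0, hm⟩⟩
  exact one_ne_zero hmem

end

theorem stmt4_general (F : Type*) [Field F] (m : ℕ) (hm : 2 ≤ m) :
    ¬ ∃ B : NonUnitalSubalgebra F ↥(blockAlg F m),
        B.toSubmodule ⊔ radJ F m = ⊤ ∧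
        B.toSubmodule ⊓ radJ F m = ⊥ ∧
        (∀ b ∈ B, phiBlock F m b ∈ B) := by
  rintro ⟨B, hsup, hinf, hphi⟩
  have hB_le : B.toSubmodule ≤ radJ F m := fun b hb =>
    mem_radJ_of_phiBlock_eq <|
      Submodule.eq_of_sub_mem_of_disjoint (disjoint_iff.mpr hinf) hphi phiBlock_sub_mem_radJ hb
  exact radJ_ne_top (by omega) ((sup_eq_right.mpr hB_le).symm.trans hsup)

/-- the algebra of block matrices `[[C, D], [0, 0]]` has no
`φ`-invariant Wedderburn–Malcev decomposition: there is no subalgebra `B`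
with `A = B ⊕ J(A)` as vector spaces and `φ(B) ⊆ B`. -/
theorem stmt4 (F : Type*) [Field F] [CharZero F] (m : ℕ) (hm : 2 ≤ m) :
    ¬ ∃ B : NonUnitalSubalgebra F ↥(blockAlg F m),
        B.toSubmodule ⊔ radJ F m = ⊤ ∧
        B.toSubmodule ⊓ radJ F m = ⊥ ∧
        (∀ b ∈ B, phiBlock F m b ∈ B) :=
  stmt4_general F m hm
end

section
/- Let A be the associative algebra of matrices [[C,D],[0,0]] (C,D ∈ M_m(F), m ≥ 2) viewed as a Lie algebra g under the commutator [x,y] = xy − yx, acting on A by the adjoint action ad(x)(a) = xa − ax (derivations of A). Then there is no maximal semisimple associative subalgebra B of A with A = B ⊕ J(A) such that B is invariant under all ad(x), x ∈ A; i.e., there is no g-invariant Wedderburn–Malcev decomposition. -/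
open Matrix

/-! If `A = B ⊕ J` with `B` a Lie ideal of `A` and `J` abelian with `[A, J] ⊆ J`, then
`[B, J] ⊆ B ∩ J = 0`, so `J` is central. For the block algebra, `J(A)` is not central:
`[[1, 0], [0, 0]]` does not commute with `[[0, 1], [0, 0]]`. -/

theorem commute_of_isCompl_of_commutator_mem {R A : Type*} [Ring R] [NonUnitalRing A]
    [Module R A] {B J : Submodule R A} (hBJ : IsCompl B J)
    (hB : ∀ x, ∀ b ∈ B, x * b - b * x ∈ B) (hJ : ∀ x, ∀ j ∈ J, x * j - j * x ∈ J)
    (hJJ : ∀ j ∈ J, ∀ j' ∈ J, Commute j j') (x : A) {j : A} (hj : j ∈ J) : Commute x j := by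
  obtain ⟨b, hb, j', hj', rfl⟩ :=
    Submodule.mem_sup.mp (hBJ.sup_eq_top ▸ Submodule.mem_top (x := x))
  have hbj : b * j - j * b = 0 := by
    refine Submodule.disjoint_def.mp hBJ.disjoint _ ?_ (hJ b j hj)
    simpa only [neg_sub] using neg_mem (hB j b hb)
  exact Commute.add_left (sub_eq_zero.mp hbj) (hJJ j' hj' j hj)

section blockAlg

variable {F : Type*} [Field F] {m : ℕ}

theorem radJ_mul_eq_zero {j : blockAlg F m} (hj : j ∈ radJ F m) (x : blockAlg F m) :
    j * x = 0 := by
  obtain ⟨D, hD⟩ := hj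
  obtain ⟨C', D', hx⟩ := x.2
  ext1
  simp [hD, hx, fromBlocks_multiply]

theorem mul_mem_radJ (x : blockAlg F m) {j : blockAlg F m} (hj : j ∈ radJ F m) :
    x * j ∈ radJ F m := by
  obtain ⟨D, hD⟩ := hj
  obtain ⟨C', D', hx⟩ := x.2
  exact ⟨C' * D, by simp [hD, hx, fromBlocks_multiply]⟩

theorem commutator_mem_radJ (x : blockAlg F m) {j : blockAlg F m} (hj : j ∈ radJ F m) :
    x * j - j * x ∈ radJ F m := by
  simpa only [radJ_mul_eq_zero hj, sub_zero] using mul_mem_radJ x hj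

theorem commute_of_mem_radJ {j j' : blockAlg F m} (hj : j ∈ radJ F m) (hj' : j' ∈ radJ F m) :
    Commute j j' := by
  rw [Commute, SemiconjBy, radJ_mul_eq_zero hj, radJ_mul_eq_zero hj']

theorem exists_not_commute_radJ (hm : 0 < m) : ∃ x, ∃ j ∈ radJ F m, ¬ Commute x j := by
  refine ⟨⟨fromBlocks 1 0 0 0, 1, 0, rfl⟩, ⟨fromBlocks 0 1 0 0, 0, 1, rfl⟩, ⟨1, rfl⟩, fun h => ?_⟩
  have := congr_fun₂ (congr_arg Subtype.val h) (Sum.inl ⟨0, hm⟩) (Sum.inr ⟨0, hm⟩)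
  simp [fromBlocks_multiply] at this

end blockAlg

theorem stmt7_general (F : Type*) [Field F] (m : ℕ) (hm : 2 ≤ m) :
    ¬ ∃ B : NonUnitalSubalgebra F ↥(blockAlg F m),
        B.toSubmodule ⊔ radJ F m = ⊤ ∧
        B.toSubmodule ⊓ radJ F m = ⊥ ∧
        (∀ x : ↥(blockAlg F m), ∀ b ∈ B, x * b - b * x ∈ B) := by
  rintro ⟨B, hsup, hinf, hinv⟩
  obtain ⟨x, j, hj, hxj⟩ := exists_not_commute_radJ (F := F) (by omega : 0 < m)
  exact hxj <| commute_of_isCompl_of_commutator_mem (IsCompl.of_eq hinf hsup) hinv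
    commutator_mem_radJ (fun _ hj _ hj' => commute_of_mem_radJ hj hj') x hj

/-- the algebra of block matrices `[[C, D], [0, 0]]` (with the
adjoint action of itself, viewed as a Lie algebra, by derivations
`ad(x)(a) = xa − ax`) has no `𝔤`-invariant Wedderburn–Malcev decomposition:
there is no subalgebra `B` with `A = B ⊕ J(A)` as vector spaces and
`ad(x)(B) ⊆ B` for all `x ∈ A`. -/
theorem stmt7 (F : Type*) [Field F] [CharZero F] (m : ℕ) (hm : 2 ≤ m) :
    ¬ ∃ B : NonUnitalSubalgebra F ↥(blockAlg F m),
        B.toSubmodule ⊔ radJ F m = ⊤ ∧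
        B.toSubmodule ⊓ radJ F m = ⊥ ∧
        (∀ x : ↥(blockAlg F m), ∀ b ∈ B, x * b - b * x ∈ B) :=
  stmt7_general F m hm
end

section
/- Let A be a finite dimensional associative algebra with a generalized H-action, J an H-invariant nilpotent two-sided ideal with J^p = 0, and fix a vector space decomposition A/J = B_1 ⊕ ⋯ ⊕ B_q and linear section κ : A/J → A of the projection π. Define d as the maximal dimension of B_{i_1} ⊕ ⋯ ⊕ B_{i_r} over tuples with (Hκ(B_{i_1}))A⁺(Hκ(B_{i_2}))A⁺⋯A⁺(Hκ(B_{i_r})) ≠ 0 (A⁺ = A + F·1). Then for every partition λ = (λ_1,…,λ_s) ⊢ n with Σ_{k=d+1}^{s} λ_k ≥ p, the multiplicity m(A,H,λ) of the irreducible S_n-character χ(λ) in the n-th H-cocharacter of A is zero. -/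
/-- Product of the elements of a list in a possibly non-unital ring
(`0` for the empty list). -/
def prodNE {A : Type*} [NonUnitalRing A] : List A → A
  | [] => 0
  | (x :: xs) => xs.foldl (· * ·) x

/-- Evaluation of the multilinear `H`-monomial
`x_{σ(1)}^{h_1} ⋯ x_{σ(n)}^{h_n}` at the substitution `x_i ↦ a i`. -/
noncomputable def evalHMonomial {F H A : Type*} [Field F] [Ring H] [Algebra F H]
    [NonUnitalRing A] [Module F A] (ζ : H →ₐ[F] Module.End F A) {n : ℕ}
    (σ : Equiv.Perm (Fin n)) (h : Fin n → H) (a : Fin n → A) : A :=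
  prodNE (List.ofFn fun i => ζ (h i) (a (σ i)))

/-- Product of two subspaces of an algebra. -/
def subMul {F A : Type*} [Field F] [NonUnitalRing A] [Module F A]
    (X Y : Submodule F A) : Submodule F A :=
  Submodule.span F {z | ∃ x ∈ X, ∃ y ∈ Y, z = x * y}

/-- The product `(H κ(B_{i_1})) A⁺ (H κ(B_{i_2})) A⁺ ⋯ A⁺ (H κ(B_{i_r}))` for a
tuple `(i_1, …, i_r)`, where `f i = H κ(B_i)` and `X A⁺ Y = X Y + X A Y`
(`A⁺ = A + F·1`). -/
def chainProd {F A : Type*} [Field F] [NonUnitalRing A] [Module F A] {q : ℕ}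
    (f : Fin q → Submodule F A) : List (Fin q) → Submodule F A
  | [] => ⊥
  | (i :: l) => l.foldl
      (fun acc j => subMul acc (f j) ⊔ subMul (subMul acc ⊤) (f j)) (f i)

/-- The subspace `H · W` of `A`, for a subspace `W ⊆ A`. -/
def hSpan {F H A : Type*} [Field F] [Ring H] [Algebra F H]
    [NonUnitalRing A] [Module F A] (ζ : H →ₐ[F] Module.End F A)
    (W : Submodule F A) : Submodule F A :=
  Submodule.span F {x | ∃ (h : H), ∃ v ∈ W, x = ζ h v}

/-!
Already the column antisymmetrizer `b_T` kills every multilinear `H`-polynomial. Pass to the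
unitization `A⁺ = F ⊕ A`: there subspaces form a semiring, `A⁺` is `⊤`, and
`⊤ · chainProd f [i₁, …, iᵣ] · ⊤ = ⊤ f_{i₁} ⊤ f_{i₂} ⋯ ⊤ f_{iᵣ} ⊤`, which can only grow when
indices are deleted. Applied to an `H`-monomial, `b_T` gives a multilinear map, so it suffices to
evaluate it on a spanning family made of bases of `J, κ(B_1), …, κ(B_q)`. If a column receives
the same basis vector twice, the terms cancel in pairs. Otherwise a nonzero monomial yields a
nonzero repetition-free chain over the blocks `κ(B_i)` that occur, so these have total dimension
at most `d`; each column then receives at most `d` vectors outside `J`, so at least `p` factors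
lie in `J` and the monomial vanishes.
-/

section SubmoduleProducts

variable {R B α : Type*} [CommSemiring R] [Semiring B] [Algebra R B]

theorem Submodule.le_mul_top (M : Submodule R B) : M ≤ M * ⊤ := by
  simpa using mul_le_mul' (le_refl M) (le_top : (1 : Submodule R B) ≤ ⊤)

theorem Submodule.le_top_mul (M : Submodule R B) : M ≤ ⊤ * M := by
  simpa using mul_le_mul' (le_top : (1 : Submodule R B) ≤ ⊤) (le_refl M)

theorem Submodule.top_mul_top : (⊤ : Submodule R B) * ⊤ = ⊤ :=
  le_antisymm le_top (Submodule.le_mul_top ⊤)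

theorem list_prod_mem_top_mul_prod_filterMap (x : α → B) (S : α → Option (Submodule R B))
    (hx : ∀ a M, S a = some M → x a ∈ M) (hS : ∀ a M, S a = some M → M * ⊤ ≤ M) :
    ∀ L : List α, (L.map x).prod ∈ ⊤ * (L.filterMap S).prod
  | [] => by simp
  | a :: L => by
    have ih := list_prod_mem_top_mul_prod_filterMap x S hx hS L
    rw [List.map_cons, List.prod_cons]
    cases hSa : S a with
    | none =>
      rw [List.filterMap_cons_none hSa, ← Submodule.top_mul_top, mul_assoc]
      exact Submodule.mul_mem_mul Submodule.mem_top ih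
    | some M =>
      rw [List.filterMap_cons_some hSa, List.prod_cons]
      refine Submodule.le_top_mul _ ?_
      have := Submodule.mul_mem_mul (hx a M hSa) ih
      rw [← mul_assoc] at this
      exact mul_le_mul' (hS a M hSa) le_rfl this

theorem top_mul_prod_le_of_sublist (g : α → Submodule R B) (hg : ∀ a, g a * ⊤ ≤ g a)
    {l₁ l₂ : List α} (h : l₁.Sublist l₂) :
    ⊤ * (l₂.map g).prod ≤ ⊤ * (l₁.map g).prod := by
  induction h with
  | slnil => exact le_rfl
  | cons a _ ih =>
    rw [List.map_cons, List.prod_cons, ← mul_assoc]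
    calc ⊤ * g a * (_ : List (Submodule R B)).prod ≤ ⊤ * _ := mul_le_mul' le_top le_rfl
      _ ≤ _ := ih
  | cons_cons a _ ih =>
    simp only [List.map_cons, List.prod_cons]
    have hga : g a = g a * ⊤ := le_antisymm (Submodule.le_mul_top _) (hg a)
    rw [hga, mul_assoc (g a), mul_assoc (g a)]
    exact mul_le_mul' le_rfl (mul_le_mul' le_rfl ih)

end SubmoduleProducts

section Unitization

variable {F A : Type*} [Field F] [NonUnitalRing A] [Module F A] [SMulCommClass F A A]
  [IsScalarTower F A A]

local notation "ι" => Unitization.inrHom F F A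

theorem Unitization.list_prod_map_inr (l : List A) (hl : l ≠ []) :
    (l.map ((↑) : A → Unitization F A)).prod = ↑(prodNE l) := by
  obtain ⟨x, xs, rfl⟩ := List.exists_cons_of_ne_nil hl
  show _ = ((xs.foldl (· * ·) x : A) : Unitization F A)
  induction xs generalizing x with
  | nil => simp
  | cons y ys ih =>
    rw [List.foldl_cons, ← ih _ (List.cons_ne_nil _ _)]
    simp only [List.map_cons, List.prod_cons, Unitization.inr_mul, mul_assoc]

theorem Unitization.snd_list_prod_map_inr (l : List A) :
    (l.map ((↑) : A → Unitization F A)).prod.snd = prodNE l := by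
  rcases eq_or_ne l [] with rfl | hl
  · exact Unitization.snd_one
  · rw [Unitization.list_prod_map_inr l hl, Unitization.snd_inr]

theorem map_subMul (X Y : Submodule F A) : (subMul X Y).map ι = X.map ι * Y.map ι := by
  apply le_antisymm
  · rw [subMul, Submodule.map_span, Submodule.span_le]
    rintro _ ⟨_, ⟨x, hx, y, hy, rfl⟩, rfl⟩
    simpa [Unitization.inr_mul] using
      Submodule.mul_mem_mul (Submodule.mem_map_of_mem (f := ι) hx)
        (Submodule.mem_map_of_mem (f := ι) hy)
  · rw [Submodule.mul_le]
    rintro _ ⟨x, hx, rfl⟩ _ ⟨y, hy, rfl⟩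
    exact ⟨x * y, Submodule.subset_span ⟨x, hx, y, hy, rfl⟩, Unitization.inr_mul F x y⟩

theorem top_eq_one_sup_map_top :
    (⊤ : Submodule F (Unitization F A)) = 1 ⊔ (⊤ : Submodule F A).map ι := by
  refine (eq_top_iff.mpr fun b _ => ?_).symm
  rw [← Unitization.inl_fst_add_inr_snd_eq b]
  exact Submodule.add_mem_sup (Submodule.mem_one.mpr ⟨b.fst, rfl⟩)
    (Submodule.mem_map_of_mem Submodule.mem_top)

theorem map_chainStep (X Y : Submodule F A) :
    (subMul X Y ⊔ subMul (subMul X ⊤) Y).map ι = X.map ι * ⊤ * Y.map ι := by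
  rw [Submodule.map_sup, map_subMul, map_subMul, map_subMul, top_eq_one_sup_map_top,
    Submodule.mul_sup, Submodule.sup_mul, mul_one]

variable {q : ℕ}

theorem map_foldl_chainStep_mul_top (f : Fin q → Submodule F A) (t : List (Fin q))
    (X : Submodule F A) :
    (t.foldl (fun acc j => subMul acc (f j) ⊔ subMul (subMul acc ⊤) (f j)) X).map ι * ⊤ =
      X.map ι * ⊤ * (t.map fun j => (f j).map ι * ⊤).prod := by
  induction t generalizing X with
  | nil => simp
  | cons j t ih => simp only [List.foldl_cons, ih, map_chainStep, List.map_cons, List.prod_cons,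
      mul_assoc]

theorem top_mul_prod_eq_map_chainProd (f : Fin q → Submodule F A) (i : Fin q)
    (t : List (Fin q)) :
    ⊤ * ((i :: t).map fun j => (f j).map ι * ⊤).prod = ⊤ * (chainProd f (i :: t)).map ι * ⊤ := by
  rw [chainProd, mul_assoc, map_foldl_chainStep_mul_top, List.map_cons, List.prod_cons]

variable {α : Type*}

theorem chainProd_dedup_filterMap_ne_bot (f : Fin q → Submodule F A) (x : α → A)
    (lab : α → Option (Fin q)) (hx : ∀ a i, lab a = some i → x a ∈ f i) (L : List α)
    (hL : prodNE (L.map x) ≠ 0) (hlab : L.filterMap lab ≠ []) :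
    chainProd f (L.filterMap lab).dedup ≠ ⊥ := by
  obtain ⟨i, t, ht⟩ := List.exists_cons_of_ne_nil (mt (List.dedup_eq_nil _).mp hlab)
  intro hbot
  let g : Fin q → Submodule F (Unitization F A) := fun j => (f j).map ι * ⊤
  have hg : ∀ j, g j * ⊤ ≤ g j := fun j => by
    simp only [g, mul_assoc, Submodule.top_mul_top, le_rfl]
  have hmem := list_prod_mem_top_mul_prod_filterMap (fun a => (x a : Unitization F A))
    (fun a => (lab a).map g)
    (fun a M ha => by
      obtain ⟨j, hj, rfl⟩ := Option.map_eq_some_iff.mp ha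
      exact Submodule.le_mul_top _ (Submodule.mem_map_of_mem (hx a j hj)))
    (fun a M ha => by
      obtain ⟨j, -, rfl⟩ := Option.map_eq_some_iff.mp ha
      exact hg j) L
  rw [← List.map_filterMap] at hmem
  have := top_mul_prod_le_of_sublist g hg (List.dedup_sublist _) hmem
  rw [ht, top_mul_prod_eq_map_chainProd, ← ht, hbot, Submodule.map_bot, Submodule.mul_bot,
    Submodule.bot_mul, Submodule.mem_bot] at this
  apply hL
  rw [← Unitization.snd_list_prod_map_inr (F := F), List.map_map]
  exact this ▸ Unitization.snd_zero

theorem sum_toFinset_filterMap_le_of_prodNE_ne_zero (f : Fin q → Submodule F A) (w : Fin q → ℕ)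
    (d : ℕ) (hd : ∀ l : List (Fin q), l ≠ [] → l.Nodup → chainProd f l ≠ ⊥ → (l.map w).sum ≤ d)
    (x : α → A) (lab : α → Option (Fin q)) (hx : ∀ a i, lab a = some i → x a ∈ f i)
    (L : List α) (hL : prodNE (L.map x) ≠ 0) :
    ∑ i ∈ (L.filterMap lab).toFinset, w i ≤ d := by
  rcases eq_or_ne (L.filterMap lab) [] with hlab | hlab
  · simp [hlab]
  · rw [show (L.filterMap lab).toFinset = (L.filterMap lab).dedup.toFinset by ext; simp,
      List.sum_toFinset _ (List.nodup_dedup _)]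
    exact hd _ (mt (List.dedup_eq_nil _).mp hlab) (List.nodup_dedup _)
      (chainProd_dedup_filterMap_ne_bot f x lab hx L hL hlab)

variable (J : Submodule F A)

theorem map_mul_top_le (hJr : ∀ a : A, ∀ x ∈ J, x * a ∈ J) : J.map ι * ⊤ ≤ J.map ι := by
  rw [top_eq_one_sup_map_top, Submodule.mul_sup, mul_one, ← map_subMul]
  refine sup_le le_rfl (Submodule.map_mono (Submodule.span_le.mpr ?_))
  rintro _ ⟨x, hx, a, -, rfl⟩
  exact hJr a x hx

theorem map_pow_eq_bot {p : ℕ} (hp : 1 ≤ p)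
    (hJp : ∀ l : List A, l.length = p → (∀ x ∈ l, x ∈ J) → prodNE l = 0) :
    J.map ι ^ p = ⊥ := by
  rw [Submodule.pow_eq_span_pow_set, Submodule.span_eq_bot]
  intro b hb
  obtain ⟨y, rfl⟩ := Set.mem_pow.mp hb
  choose x hxJ hx using fun k => (y k).2
  have hne : List.ofFn x ≠ [] := by simp; omega
  have hy : (List.ofFn fun k => (y k : Unitization F A)) = (List.ofFn x).map (↑) := by
    rw [List.map_ofFn]; exact congrArg List.ofFn (funext fun k => (hx k).symm)
  rw [hy, Unitization.list_prod_map_inr _ hne,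
    hJp _ (List.length_ofFn) (by simpa using hxJ), Unitization.inr_zero]

theorem prodNE_eq_zero_of_le_countP [DecidablePred (· ∈ J)]
    (hJr : ∀ a : A, ∀ x ∈ J, x * a ∈ J) {p : ℕ} (hp : 1 ≤ p)
    (hJp : ∀ l : List A, l.length = p → (∀ x ∈ l, x ∈ J) → prodNE l = 0)
    (L : List A) (hL : p ≤ L.countP (· ∈ J)) : prodNE L = 0 := by
  let S : A → Option (Submodule F (Unitization F A)) :=
    fun x => if x ∈ J then some (J.map ι) else none
  have hS : ∀ L : List A, L.filterMap S = List.replicate (L.countP (· ∈ J)) (J.map ι) := by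
    intro L
    induction L with
    | nil => rfl
    | cons x L ih => by_cases hx : x ∈ J <;> simp [S, hx, ← ih, List.replicate_succ]
  have hmem := list_prod_mem_top_mul_prod_filterMap (↑) S
    (fun x M hx => by
      simp only [S, Option.ite_none_right_eq_some, Option.some.injEq] at hx
      exact hx.2 ▸ Submodule.mem_map_of_mem hx.1)
    (fun x M hx => by
      simp only [S, Option.ite_none_right_eq_some, Option.some.injEq] at hx
      exact hx.2 ▸ map_mul_top_le J hJr) L
  rw [hS, List.prod_replicate, ← Nat.add_sub_cancel' hL, pow_add, map_pow_eq_bot J hp hJp,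
    Submodule.bot_mul, Submodule.mul_bot, Submodule.mem_bot] at hmem
  rw [← Unitization.snd_list_prod_map_inr (F := F), hmem, Unitization.snd_zero]

end Unitization

section Tableaux

open Finset

theorem YoungDiagram.card_filter_le_card_sdiff (Y : YoungDiagram) (d : ℕ)
    (Q : Finset (ℕ × ℕ)) (hQ : ∀ j, #{c ∈ Q | c.2 = j} ≤ d) :
    #{c ∈ Y.cells | d ≤ c.1} ≤ #(Y.cells \ Q) := by
  have hmaps : ∀ s ⊆ Y.cells, ∀ c ∈ s, c.2 ∈ Y.cells.image Prod.snd :=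
    fun s hs c hc => mem_image_of_mem _ (hs hc)
  rw [card_eq_sum_card_fiberwise (hmaps _ (filter_subset _ _)),
    card_eq_sum_card_fiberwise (hmaps _ sdiff_subset)]
  refine sum_le_sum fun j _ => ?_
  have hlow : {c ∈ {c ∈ Y.cells | d ≤ c.1} | c.2 = j} = Ico d (Y.colLen j) ×ˢ {j} := by
    ext ⟨a, b⟩
    simp only [mem_filter, mem_product, mem_Ico, mem_singleton, YoungDiagram.mem_cells,
      YoungDiagram.mem_iff_lt_colLen]
    constructor <;> rintro ⟨⟨h₁, h₂⟩, rfl⟩ <;> exact ⟨⟨h₂, h₁⟩, rfl⟩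
  have hcol : Y.col j ⊆ {c ∈ Y.cells \ Q | c.2 = j} ∪ {c ∈ Q | c.2 = j} := by
    intro c hc
    rw [YoungDiagram.mem_col_iff] at hc
    by_cases hcQ : c ∈ Q <;> simp [hc, hcQ]
  have := (card_le_card hcol).trans (card_union_le _ _)
  rw [← YoungDiagram.colLen_eq_card] at this
  rw [hlow, card_product, Nat.card_Ico, card_singleton, mul_one]
  have := hQ j
  omega

theorem YoungDiagram.card_filter_le_card_compl_of_tableau {n : ℕ} (Y : YoungDiagram)
    (hY : Y.card = n) (T : Fin n → ℕ × ℕ) (hTinj : Function.Injective T) (hT : ∀ i, T i ∈ Y)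
    (d : ℕ) (P : Finset (Fin n)) (hP : ∀ j, #{m ∈ P | (T m).2 = j} ≤ d) :
    #{c ∈ Y.cells | d ≤ c.1} ≤ #Pᶜ := by
  have hQ : ∀ j, #{c ∈ P.image T | c.2 = j} ≤ d := fun j => by
    rw [filter_image]
    exact card_image_le.trans (hP j)
  have hsub : P.image T ⊆ Y.cells := by
    intro c hc
    obtain ⟨m, -, rfl⟩ := mem_image.mp hc
    exact hT m
  calc #{c ∈ Y.cells | d ≤ c.1} ≤ #(Y.cells \ P.image T) := Y.card_filter_le_card_sdiff d _ hQ
    _ = #Pᶜ := by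
      rw [card_sdiff_of_subset hsub, card_image_of_injective _ hTinj, card_compl, Fintype.card_fin]
      exact congrArg (· - #P) hY

end Tableaux

theorem List.countP_ofFn {α : Type*} {n : ℕ} (x : Fin n → α) (P : α → Bool) :
    (List.ofFn x).countP P = (Finset.univ.filter fun k => P (x k)).card := by
  rw [List.ofFn_eq_map, List.countP_map, Finset.card, Finset.filter_val, Fin.univ_def]
  simp [List.countP_eq_length_filter]
  rfl

theorem MultilinearMap.eq_zero_of_forall_comp_eq_zero {R ι κ M N : Type*} [CommSemiring R]
    [AddCommMonoid M] [Module R M] [AddCommMonoid N] [Module R N] [Fintype ι] [DecidableEq ι]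
    [Fintype κ] (G : MultilinearMap R (fun _ : ι => M) N) (e : κ → M)
    (he : Submodule.span R (Set.range e) = ⊤) (hG : ∀ r : ι → κ, G (fun i => e (r i)) = 0) :
    G = 0 := by
  ext b
  choose c hc using fun i =>
    (Submodule.mem_span_range_iff_exists_fun R).mp (he.symm ▸ Submodule.mem_top (x := b i))
  rw [show b = fun i => ∑ u, c i u • e u from funext fun i => (hc i).symm, MultilinearMap.map_sum]
  simp [MultilinearMap.map_smul_univ, hG]

theorem span_range_finBasis_sigma {F M ι : Type*} [Field F] [AddCommGroup M] [Module F M]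
    (W : ι → Submodule F M) [∀ i, FiniteDimensional F (W i)] :
    Submodule.span F (Set.range fun u : Σ i, Fin (Module.finrank F (W i)) =>
      (Module.finBasis F (W u.1) u.2 : M)) = ⨆ i, W i := by
  refine le_antisymm (Submodule.span_le.mpr ?_) (iSup_le fun i => ?_)
  · rintro _ ⟨u, rfl⟩
    exact Submodule.mem_iSup_of_mem u.1 (Submodule.coe_mem _)
  · rw [← Submodule.map_subtype_top (W i), ← (Module.finBasis F (W i)).span_eq, Submodule.map_span]
    refine Submodule.span_mono ?_
    rintro _ ⟨_, ⟨t, rfl⟩, rfl⟩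
    exact ⟨⟨i, t⟩, rfl⟩

theorem Equiv.Perm.sum_sign_smul_eq_zero_of_swap {α M : Type*} [DecidableEq α] [Fintype α]
    [AddCommGroup M] (s : Finset (Equiv.Perm α)) (φ : Equiv.Perm α → M) {i j : α} (hij : i ≠ j)
    (hs : ∀ τ ∈ s, Equiv.swap i j * τ ∈ s) (hφ : ∀ τ, φ (Equiv.swap i j * τ) = φ τ) :
    ∑ τ ∈ s, (Equiv.Perm.sign τ : ℤ) • φ τ = 0 := by
  refine Finset.sum_involution (fun τ _ => Equiv.swap i j * τ) (fun τ _ => ?_) (fun τ _ _ h => ?_)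
    hs (fun τ _ => Equiv.swap_mul_self_mul i j τ)
  · rw [hφ, Equiv.Perm.sign_mul, Equiv.Perm.sign_swap hij, Units.val_mul, Units.val_neg,
      Units.val_one, neg_one_mul, neg_smul, add_neg_cancel]
  · have := congrArg (· i) (mul_eq_right.mp h)
    exact hij (by simpa using this.symm)

theorem evalHMonomial_mul {F H A : Type*} [Field F] [Ring H] [Algebra F H] [NonUnitalRing A]
    [Module F A] (ζ : H →ₐ[F] Module.End F A) {n : ℕ} (τ σ : Equiv.Perm (Fin n))
    (h : Fin n → H) (a : Fin n → A) :
    evalHMonomial ζ (τ * σ) h a = evalHMonomial ζ σ h fun m => a (τ m) := rfl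

section HMonomials

variable {F H A : Type*} [Field F] [Ring H] [Algebra F H] [NonUnitalRing A] [Module F A]
  [SMulCommClass F A A] [IsScalarTower F A A] (ζ : H →ₐ[F] Module.End F A) {n : ℕ}

noncomputable def evalHMonomialMultilinear (σ : Equiv.Perm (Fin n)) (h : Fin n → H) :
    MultilinearMap F (fun _ : Fin n => A) A :=
  ((Unitization.sndHom F F A).compMultilinearMap
    ((MultilinearMap.mkPiAlgebraFin F n (Unitization F A)).compLinearMap
      fun k => (Unitization.inrHom F F A).comp (ζ (h k)))).domDomCongr σ

@[simp]
theorem evalHMonomialMultilinear_apply (σ : Equiv.Perm (Fin n)) (h : Fin n → H) (a : Fin n → A) :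
    evalHMonomialMultilinear ζ σ h a = evalHMonomial ζ σ h a := by
  simp [evalHMonomialMultilinear, evalHMonomial, ← Unitization.snd_list_prod_map_inr (F := F),
    List.map_ofFn]
  rfl

end HMonomials

abbrev summand {F A : Type*} [Field F] [NonUnitalRing A] [Module F A] {q : ℕ}
    (J : Submodule F A) (V : Fin q → Submodule F A) (o : Option (Fin q)) : Submodule F A :=
  o.elim J V

section ColumnAntisymmetrizer

open Finset

theorem card_filter_ne_none_le_sum_of_injective_on_columns {n q : ℕ} {k : Option (Fin q) → ℕ}
    (T : Fin n → ℕ × ℕ) (r : Fin n → Σ o, Fin (k o))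
    (hr : ∀ m m', (T m).2 = (T m').2 → r m = r m' → m = m') (S : Finset (Fin q))
    (hS : ∀ m i, (r m).1 = some i → i ∈ S) (j : ℕ) :
    #{m | (r m).1 ≠ none ∧ (T m).2 = j} ≤ ∑ i ∈ S, k (some i) := by
  calc #{m | (r m).1 ≠ none ∧ (T m).2 = j}
      ≤ #((S.map Function.Embedding.some).sigma fun o => univ) := by
        refine card_le_card_of_injOn r (fun m hm => ?_) (fun m hm m' hm' hmm' => ?_)
        · simp only [coe_filter, mem_univ, true_and, Set.mem_ofPred_eq] at hm
          obtain ⟨i, hi⟩ := Option.ne_none_iff_exists'.mp hm.1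
          simpa [hi] using hS m i hi
        · simp only [coe_filter, mem_univ, true_and, Set.mem_ofPred_eq] at hm hm'
          exact hr m m' (hm.2.trans hm'.2.symm) hmm'
    _ = ∑ i ∈ S, k (some i) := by simp [card_sigma]

theorem evalHMonomial_eq_zero_of_injective_on_columns {F H A : Type*} [Field F] [Ring H]
    [Algebra F H] [NonUnitalRing A] [Module F A] [SMulCommClass F A A] [IsScalarTower F A A]
    (ζ : H →ₐ[F] Module.End F A) (J : Submodule F A) (hJr : ∀ (a : A), ∀ x ∈ J, x * a ∈ J)
    (hJH : ∀ (h : H), ∀ x ∈ J, ζ h x ∈ J) {p : ℕ} (hp : 1 ≤ p)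
    (hJp : ∀ l : List A, l.length = p → (∀ x ∈ l, x ∈ J) → prodNE l = 0)
    {q : ℕ} (V : Fin q → Submodule F A) {d : ℕ}
    (hd_ub : ∀ l : List (Fin q), l ≠ [] → l.Nodup →
      chainProd (fun i => hSpan ζ (V i)) l ≠ ⊥ →
      (l.map fun i => Module.finrank F (V i)).sum ≤ d)
    {n : ℕ} (Y : YoungDiagram) (hY : Y.card = n) (hrows : p ≤ #{c ∈ Y.cells | d ≤ c.1})
    (T : Fin n → ℕ × ℕ) (hTinj : Function.Injective T) (hT : ∀ i, T i ∈ Y)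
    (e : (Σ o, Fin (Module.finrank F (summand J V o))) → A) (he : ∀ u, e u ∈ summand J V u.1)
    (r : Fin n → Σ o, Fin (Module.finrank F (summand J V o)))
    (hr : ∀ m m', (T m).2 = (T m').2 → r m = r m' → m = m') (ν : Equiv.Perm (Fin n))
    (h : Fin n → H) : evalHMonomial ζ ν h (fun m => e (r m)) = 0 := by
  classical
  set S := ((List.finRange n).filterMap fun k => (r (ν k)).1).toFinset
  by_contra hne
  have hS : ∑ i ∈ S, Module.finrank F (V i) ≤ d :=
    sum_toFinset_filterMap_le_of_prodNE_ne_zero _ _ d hd_ub (fun k => ζ (h k) (e (r (ν k)))) _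
      (fun k i hk => Submodule.subset_span ⟨h k, _, by simpa [hk] using he (r (ν k)), rfl⟩) _
      (by rwa [← List.ofFn_eq_map])
  have hlab : ∀ m i, (r m).1 = some i → i ∈ S := fun m i hi => by
    simpa [S] using ⟨ν.symm m, by simpa using hi⟩
  set P : Finset (Fin n) := {m | (r m).1 ≠ none}
  have hcol : ∀ j, #{m ∈ P | (T m).2 = j} ≤ d := fun j => by
    rw [filter_filter]
    exact (card_filter_ne_none_le_sum_of_injective_on_columns T r hr S hlab j).trans hS
  apply hne
  refine prodNE_eq_zero_of_le_countP J hJr hp hJp _ ?_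
  rw [List.countP_ofFn]
  calc p ≤ #Pᶜ :=
        hrows.trans (Y.card_filter_le_card_compl_of_tableau hY T hTinj hT d _ hcol)
    _ ≤ _ := by
      refine card_le_card_of_injOn ν.symm (fun m hm => ?_) ν.symm.injective.injOn
      simp only [compl_filter, not_not, coe_filter, mem_univ, true_and, Set.mem_ofPred_eq, P]
        at hm ⊢
      simp only [decide_eq_true_eq, Equiv.apply_symm_apply]
      exact hJH _ _ (by simpa [hm] using he (r m))

theorem sum_sign_smul_evalHMonomial_column_eq_zero {F H A : Type*} [Field F] [Ring H]
    [Algebra F H] [NonUnitalRing A] [Module F A] [SMulCommClass F A A] [IsScalarTower F A A]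
    [FiniteDimensional F A]
    (ζ : H →ₐ[F] Module.End F A) (J : Submodule F A) (hJr : ∀ (a : A), ∀ x ∈ J, x * a ∈ J)
    (hJH : ∀ (h : H), ∀ x ∈ J, ζ h x ∈ J) {p : ℕ} (hp : 1 ≤ p)
    (hJp : ∀ l : List A, l.length = p → (∀ x ∈ l, x ∈ J) → prodNE l = 0)
    {q : ℕ} (V : Fin q → Submodule F A) (hsup : (⨆ i, V i) ⊔ J = ⊤) {d : ℕ}
    (hd_ub : ∀ l : List (Fin q), l ≠ [] → l.Nodup →
      chainProd (fun i => hSpan ζ (V i)) l ≠ ⊥ →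
      (l.map fun i => Module.finrank F (V i)).sum ≤ d)
    {n : ℕ} (Y : YoungDiagram) (hY : Y.card = n) (hrows : p ≤ #{c ∈ Y.cells | d ≤ c.1})
    (T : Fin n → ℕ × ℕ) (hTinj : Function.Injective T) (hT : ∀ i, T i ∈ Y)
    (π : Equiv.Perm (Fin n)) (h : Fin n → H) (a : Fin n → A) :
    ∑ τ ∈ univ.filter (fun τ : Equiv.Perm (Fin n) => ∀ i, (T (τ i)).2 = (T i).2),
      (Equiv.Perm.sign τ : ℤ) • evalHMonomial ζ (τ * π) h a = 0 := by
  classical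
  set C := univ.filter (fun τ : Equiv.Perm (Fin n) => ∀ i, (T (τ i)).2 = (T i).2)
  let e : (Σ o, Fin (Module.finrank F (summand J V o))) → A :=
    fun u => (Module.finBasis F (summand J V u.1) u.2 : A)
  have he : Submodule.span F (Set.range e) = ⊤ := by
    rw [span_range_finBasis_sigma, iSup_option, sup_comm]
    exact hsup
  let G : MultilinearMap F (fun _ : Fin n => A) A :=
    ∑ τ ∈ C, (Equiv.Perm.sign τ : ℤ) • evalHMonomialMultilinear ζ (τ * π) h
  have hG : ∀ b, G b = ∑ τ ∈ C, (Equiv.Perm.sign τ : ℤ) • evalHMonomial ζ (τ * π) h b := by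
    simp [G]
  rw [← hG, MultilinearMap.eq_zero_of_forall_comp_eq_zero G e he fun r => ?_, zero_apply]
  rw [hG]
  by_cases hcol : ∃ m m', m ≠ m' ∧ (T m).2 = (T m').2 ∧ r m = r m'
  · obtain ⟨m, m', hmm', hTmm', hrmm'⟩ := hcol
    have hswap : ∀ k, (T (Equiv.swap m m' k)).2 = (T k).2 ∧ r (Equiv.swap m m' k) = r k := by
      intro k
      rcases eq_or_ne k m with rfl | hkm
      · simp [hTmm', hrmm']
      rcases eq_or_ne k m' with rfl | hkm'
      · simp [hTmm', hrmm']
      · simp [Equiv.swap_apply_of_ne_of_ne hkm hkm']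
    refine Equiv.Perm.sum_sign_smul_eq_zero_of_swap C _ hmm' (fun τ hτ => ?_) (fun τ => ?_)
    · simp only [C, mem_filter, mem_univ, true_and, Equiv.Perm.mul_apply] at hτ ⊢
      exact fun i => (hswap _).1.trans (hτ i)
    · simp only [mul_assoc, evalHMonomial_mul, (hswap _).2]
  · refine sum_eq_zero fun τ _ => ?_
    rw [evalHMonomial_eq_zero_of_injective_on_columns ζ J hJr hJH hp hJp V hd_ub Y hY hrows T
      hTinj hT e (fun u => Submodule.coe_mem _) r
      (fun m m' hc hr => by_contra fun hne => hcol ⟨m, m', hne, hc, hr⟩), smul_zero]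

end ColumnAntisymmetrizer

theorem stmt9_general {F H A : Type*} [Field F] [Ring H] [Algebra F H]
    [NonUnitalRing A] [Module F A] [SMulCommClass F A A] [IsScalarTower F A A]
    [FiniteDimensional F A]
    (ζ : H →ₐ[F] Module.End F A)
    -- the ideal J
    (J : Submodule F A)
    (hJr : ∀ (a : A), ∀ x ∈ J, x * a ∈ J)
    (hJH : ∀ (h : H), ∀ x ∈ J, ζ h x ∈ J)
    (p : ℕ) (hp : 1 ≤ p)
    (hJp : ∀ l : List A, l.length = p → (∀ x ∈ l, x ∈ J) → prodNE l = 0)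
    -- the decomposition A = κ(B_1) ⊕ ⋯ ⊕ κ(B_q) ⊕ J, where V i = κ(B_i)
    (q : ℕ) (V : Fin q → Submodule F A)
    (hsup : (⨆ i, V i) ⊔ J = ⊤)
    -- the number d
    (d : ℕ)
    (hd_ub : ∀ l : List (Fin q), l ≠ [] → l.Nodup →
      chainProd (fun i => hSpan ζ (V i)) l ≠ ⊥ →
      (l.map fun i => Module.finrank F (V i)).sum ≤ d)
    -- the partition λ ⊢ n with at least p cells below the d-th row
    (n : ℕ) (Y : YoungDiagram) (hY : Y.card = n)
    (hrows : p ≤ (Y.cells.filter fun c => d ≤ c.1).card)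
    -- a Young tableau of shape Y
    (T : Fin n → ℕ × ℕ) (hTinj : Function.Injective T) (hT : ∀ i, T i ∈ Y) :
    -- e*_T f ∈ Id^H(A) for every multilinear H-polynomial f
    ∀ (σ : Equiv.Perm (Fin n)) (h : Fin n → H) (a : Fin n → A),
      ∑ τ ∈ Finset.univ.filter
          (fun τ : Equiv.Perm (Fin n) => ∀ i, (T (τ i)).2 = (T i).2),
        ∑ ρ ∈ Finset.univ.filter
          (fun ρ : Equiv.Perm (Fin n) => ∀ i, (T (ρ i)).1 = (T i).1),
          (Equiv.Perm.sign τ : ℤ) • evalHMonomial ζ (τ * ρ * σ) h a = 0 := by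
  intro σ h a
  rw [Finset.sum_comm]
  refine Finset.sum_eq_zero fun ρ _ => ?_
  simp only [mul_assoc]
  exact sum_sign_smul_evalHMonomial_column_eq_zero ζ J hJr hJH hp hJp V hsup hd_ub Y hY hrows T
    hTinj hT (ρ * σ) h a

/-- Lemma 5 of the paper: let `A` be a finite dimensional algebra
with a generalized `H`-action, `J` an `H`-invariant two-sided ideal with
`J^p = 0`, `A = κ(B_1) ⊕ ⋯ ⊕ κ(B_q) ⊕ J` (image of a linear section
`κ : A/J → A` of the projection), and let `d` be the maximal dimension of
`B_{i_1} ⊕ ⋯ ⊕ B_{i_r}` over tuples with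
`(Hκ(B_{i_1}))A⁺⋯A⁺(Hκ(B_{i_r})) ≠ 0`. Then for every partition
`λ ⊢ n` (given by a Young diagram `Y` with `n` cells) with at least `p` cells
below the `d`-th row, the multiplicity `m(A, H, λ)` in the `n`-th
`H`-cocharacter of `A` vanishes; equivalently, for every Young tableau `T` of
shape `λ`, the Young symmetrizer `e*_T = b_T a_T` sends every multilinear
`H`-polynomial to an `H`-identity of `A`. -/
theorem stmt9 {F H A : Type*} [Field F] [CharZero F] [Ring H] [Algebra F H]
    [NonUnitalRing A] [Module F A] [SMulCommClass F A A] [IsScalarTower F A A]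
    [FiniteDimensional F A]
    (ζ : H →ₐ[F] Module.End F A)
    (hgen : ∀ h : H, ∃ (k : ℕ) (h₁ h₂ h₃ h₄ : Fin k → H), ∀ a b : A,
      ζ h (a * b) =
        ∑ i, (ζ (h₁ i) a * ζ (h₂ i) b + ζ (h₃ i) b * ζ (h₄ i) a))
    -- the ideal J
    (J : Submodule F A)
    (hJl : ∀ (a : A), ∀ x ∈ J, a * x ∈ J)
    (hJr : ∀ (a : A), ∀ x ∈ J, x * a ∈ J)
    (hJH : ∀ (h : H), ∀ x ∈ J, ζ h x ∈ J)
    (p : ℕ) (hp : 1 ≤ p)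
    (hJp : ∀ l : List A, l.length = p → (∀ x ∈ l, x ∈ J) → prodNE l = 0)
    -- the decomposition A = κ(B_1) ⊕ ⋯ ⊕ κ(B_q) ⊕ J, where V i = κ(B_i)
    (q : ℕ) (V : Fin q → Submodule F A)
    (hsup : (⨆ i, V i) ⊔ J = ⊤)
    (hind : iSupIndep (fun o : Option (Fin q) => o.elim J V))
    -- the number d
    (d : ℕ)
    (hd_ub : ∀ l : List (Fin q), l ≠ [] → l.Nodup →
      chainProd (fun i => hSpan ζ (V i)) l ≠ ⊥ →
      (l.map fun i => Module.finrank F (V i)).sum ≤ d)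
    (hd_attained : d = 0 ∨ ∃ l : List (Fin q), l ≠ [] ∧ l.Nodup ∧
      chainProd (fun i => hSpan ζ (V i)) l ≠ ⊥ ∧
      (l.map fun i => Module.finrank F (V i)).sum = d)
    -- the partition λ ⊢ n with at least p cells below the d-th row
    (n : ℕ) (Y : YoungDiagram) (hY : Y.card = n)
    (hrows : p ≤ (Y.cells.filter fun c => d ≤ c.1).card)
    -- a Young tableau of shape Y
    (T : Fin n → ℕ × ℕ) (hTinj : Function.Injective T) (hT : ∀ i, T i ∈ Y) :
    -- e*_T f ∈ Id^H(A) for every multilinear H-polynomial f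
    ∀ (σ : Equiv.Perm (Fin n)) (h : Fin n → H) (a : Fin n → A),
      ∑ τ ∈ Finset.univ.filter
          (fun τ : Equiv.Perm (Fin n) => ∀ i, (T (τ i)).2 = (T i).2),
        ∑ ρ ∈ Finset.univ.filter
          (fun ρ : Equiv.Perm (Fin n) => ∀ i, (T (ρ i)).1 = (T i).1),
          (Equiv.Perm.sign τ : ℤ) • evalHMonomial ζ (τ * ρ * σ) h a = 0 :=
  stmt9_general ζ J hJr hJH p hp hJp q V hsup d hd_ub n Y hY hrows T hTinj hT
end

section
/- Let λ = (λ_1, …, λ_s) ⊢ n be a partition with λ_{d+1} + λ_{d+2} + ⋯ + λ_s < p (i.e., at most p−1 boxes below the d-th row). Then the dimension of the irreducible S_n-module M(λ) is at most C n^r d^n for constants C, r depending only on d and p (not on n or λ). -/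
/-- The number of standard Young tableaux of shape `Y` (with `n = |Y|` boxes):
bijective fillings of the cells of `Y` by `1, …, n` increasing along rows and
columns. This is the dimension of the irreducible `S_n`-module `M(λ)`. -/
noncomputable def sytCard (Y : YoungDiagram) (n : ℕ) : ℕ :=
  Nat.card {e : ↥Y.cells ≃ Fin n //
    ∀ a b : ↥Y.cells, (a : ℕ × ℕ).1 ≤ (b : ℕ × ℕ).1 →
      (a : ℕ × ℕ).2 ≤ (b : ℕ × ℕ).2 → e a ≤ e b}

/-!
A standard tableau is determined by its row word, which records for each label the row of the cell
carrying it. When fewer than `p` cells lie below row `d`, the first column is shorter than `d + p`,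
so every letter of the row word is `< d + p`, and fewer than `p` letters are `≥ d`. Such a word is
determined by its residues mod `d` (`d ^ n` choices) and by the set of pairs `(k, w k)` with
`w k ≥ d`, a set of at most `p` points of `Fin n × [0, d + p)`
(at most `(n (d + p) + 1) ^ p` choices), which is `O(n ^ p)`.
-/

open Finset

theorem YoungDiagram.fst_lt_add_card_filter {Y : YoungDiagram} (d : ℕ) {c : ℕ × ℕ} (hc : c ∈ Y) :
    c.1 < d + #{x ∈ Y.cells | d ≤ x.1} := by
  have hsub : (Ico d (c.1 + 1)).map ⟨fun i => (i, 0), fun _ _ h => congrArg Prod.fst h⟩ ⊆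
      {x ∈ Y.cells | d ≤ x.1} := by
    intro x hx
    simp only [mem_map, mem_Ico] at hx
    obtain ⟨i, ⟨hdi, hic⟩, rfl⟩ := hx
    exact mem_filter.2 ⟨Y.up_left_mem (Nat.lt_succ_iff.1 hic) (Nat.zero_le c.2) hc, hdi⟩
  have := card_le_card hsub
  simp only [card_map, Nat.card_Ico] at this
  omega

abbrev StandardTableau (Y : YoungDiagram) (n : ℕ) :=
  {e : ↥Y.cells ≃ Fin n //
    ∀ a b : ↥Y.cells, (a : ℕ × ℕ).1 ≤ (b : ℕ × ℕ).1 →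
      (a : ℕ × ℕ).2 ≤ (b : ℕ × ℕ).2 → e a ≤ e b}

namespace StandardTableau

variable {Y : YoungDiagram} {n : ℕ}

def rowWord (T : StandardTableau Y n) (k : Fin n) : ℕ :=
  (T.1.symm k : ℕ × ℕ).1

theorem symm_eq_of_rowWord_eq {T T' : StandardTableau Y n} (h : T.rowWord = T'.rowWord) {k : Fin n}
    (ih : ∀ j < k, T.1.symm j = T'.1.symm j)
    (hcol : (T.1.symm k : ℕ × ℕ).2 ≤ (T'.1.symm k : ℕ × ℕ).2) :
    T.1.symm k = T'.1.symm k := by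
  have hle : T'.1 (T.1.symm k) ≤ k := by
    simpa using T'.2 _ _ (congrFun h k).le hcol
  obtain hlt | heq := hle.lt_or_eq
  · have := ih _ hlt
    rw [Equiv.symm_apply_apply, T.1.symm_apply_eq, Equiv.apply_symm_apply] at this
    exact absurd this hlt.ne
  · exact (T'.1.symm_apply_eq.2 heq.symm).symm

/-- Labels increase along rows, so the label `k` sits in the leftmost cell of its row not taken by
a smaller label. -/
theorem rowWord_injective : Function.Injective (rowWord : StandardTableau Y n → Fin n → ℕ) := by
  intro T T' h
  suffices ∀ k, T.1.symm k = T'.1.symm k from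
    Subtype.ext (Equiv.symm_bijective.injective (Equiv.ext this))
  intro k
  induction k using WellFoundedLT.induction with
  | _ k ih =>
    rcases le_total (T.1.symm k : ℕ × ℕ).2 (T'.1.symm k : ℕ × ℕ).2 with hcol | hcol
    · exact symm_eq_of_rowWord_eq h ih hcol
    · exact (symm_eq_of_rowWord_eq h.symm (fun j hj => (ih j hj).symm) hcol).symm

theorem card_filter_le_rowWord (T : StandardTableau Y n) (d : ℕ) :
    #{k | d ≤ T.rowWord k} = #{x ∈ Y.cells | d ≤ x.1} := by
  refine card_bij' (fun k _ => (T.1.symm k : ℕ × ℕ)) (fun c hc => T.1 ⟨c, (mem_filter.1 hc).1⟩)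
    ?_ ?_ ?_ ?_
  · intro k hk
    exact mem_filter.2 ⟨(T.1.symm k).2, (mem_filter.1 hk).2⟩
  · intro c hc
    exact mem_filter.2 ⟨mem_univ _, by simpa [rowWord] using (mem_filter.1 hc).2⟩
  · simp
  · simp

end StandardTableau

theorem Finset.card_filter_powerset_card_le_le {α : Type*} (s : Finset α) (q : ℕ) :
    #{t ∈ s.powerset | #t ≤ q} ≤ (#s + 1) ^ q := by
  classical
  calc #{t ∈ s.powerset | #t ≤ q}
      ≤ #((range (q + 1)).biUnion fun j => s.powersetCard j) := by
        refine card_le_card fun t ht => ?_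
        simp only [mem_filter, mem_powerset] at ht
        simp only [mem_biUnion, mem_range, mem_powersetCard]
        exact ⟨#t, by omega, ht.1, rfl⟩
    _ ≤ ∑ j ∈ range (q + 1), (#s).choose j := card_biUnion_le.trans_eq (by simp [card_powersetCard])
    _ ≤ ∑ j ∈ range (q + 1), #s ^ j * 1 ^ (q - j) * q.choose j := by
        refine sum_le_sum fun j hj => ?_
        have : 0 < q.choose j := Nat.choose_pos (by simpa [Nat.lt_succ_iff] using hj)
        simpa using (Nat.choose_le_pow _ _).trans (Nat.le_mul_of_pos_right _ this)
    _ = (#s + 1) ^ q := (add_pow _ _ _).symm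

def fewLargeWords (ι : Type*) [Fintype ι] [DecidableEq ι] (m d q : ℕ) : Finset (ι → ℕ) :=
  {w ∈ Fintype.piFinset fun _ => range m | #{i | d ≤ w i} ≤ q}

theorem card_fewLargeWords_le {ι : Type*} [Fintype ι] [DecidableEq ι] {m d : ℕ} (q : ℕ)
    (hd : 0 < d) :
    #(fewLargeWords ι m d q) ≤ d ^ Fintype.card ι * (Fintype.card ι * m + 1) ^ q := by
  let large (w : ι → ℕ) : Finset (ι × ℕ) := ({i | d ≤ w i} : Finset ι).image fun i => (i, w i)
  have mem_large {w : ι → ℕ} {i : ι} {a : ℕ} : (i, a) ∈ large w ↔ d ≤ w i ∧ w i = a := by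
    simp [large]
  let encode (w : ι → ℕ) : (ι → Fin d) × Finset (ι × ℕ) :=
    (fun i => ⟨w i % d, Nat.mod_lt _ hd⟩, large w)
  have eq_of_large {w w' : ι → ℕ} (h : large w = large w') {i : ι} (hi : d ≤ w i) :
      w i = w' i :=
    (mem_large.1 (h ▸ mem_large.2 ⟨hi, rfl⟩)).2.symm
  have hinj : Set.InjOn encode (fewLargeWords ι m d q) := by
    intro w _ w' _ h
    simp only [encode, Prod.mk.injEq, funext_iff, Fin.ext_iff] at h
    funext i
    by_cases hi : d ≤ w i
    · exact eq_of_large h.2 hi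
    by_cases hi' : d ≤ w' i
    · exact (eq_of_large h.2.symm hi').symm
    simpa [Nat.mod_eq_of_lt (not_le.1 hi), Nat.mod_eq_of_lt (not_le.1 hi')] using h.1 i
  have hmaps : ∀ w ∈ fewLargeWords ι m d q, encode w ∈
      (univ : Finset (ι → Fin d)) ×ˢ {t ∈ ((univ : Finset ι) ×ˢ range m).powerset | #t ≤ q} := by
    intro w hw
    simp only [fewLargeWords, mem_filter, Fintype.mem_piFinset, mem_range] at hw
    simp only [encode, mem_product, mem_univ, true_and, mem_filter, mem_powerset]
    refine ⟨fun x hx => ?_, card_image_le.trans hw.2⟩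
    obtain ⟨i, a⟩ := x
    obtain ⟨-, rfl⟩ := mem_large.1 hx
    simpa using hw.1 i
  calc #(fewLargeWords ι m d q) ≤ _ := card_le_card_of_injOn encode hmaps hinj
    _ ≤ d ^ Fintype.card ι * (Fintype.card ι * m + 1) ^ q := by
      rw [card_product, card_univ, Fintype.card_fun, Fintype.card_fin]
      gcongr
      simpa using card_filter_powerset_card_le_le ((univ : Finset ι) ×ˢ range m) q

/-- for partitions `λ ⊢ n` whose Young diagram has fewer than
`p` boxes outside the first `d` rows, `dim M(λ) ≤ C n^r d^n` for constants
`C, r` depending only on `d` and `p`. -/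
theorem stmt18 (d p : ℕ) (hd : 1 ≤ d) :
    ∃ C r : ℝ, 0 < C ∧
      ∀ n : ℕ, 1 ≤ n → ∀ Y : YoungDiagram, Y.card = n →
        (Y.cells.filter fun c => d ≤ c.1).card < p →
        (sytCard Y n : ℝ) ≤ C * (n : ℝ) ^ r * (d : ℝ) ^ n := by
  refine ⟨((2 * (d + p) : ℕ) : ℝ) ^ p, p, by positivity, fun n hn Y _ hY => ?_⟩
  have hword (T : StandardTableau Y n) : T.rowWord ∈ fewLargeWords (Fin n) (d + p) d p := by
    refine mem_filter.2 ⟨Fintype.mem_piFinset.2 fun k => mem_range.2 ?_, ?_⟩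
    · exact (Y.fst_lt_add_card_filter d (T.1.symm k).2).trans_le (by omega)
    · exact (T.card_filter_le_rowWord d).trans_le hY.le
  have hcount : sytCard Y n ≤ d ^ n * (n * (d + p) + 1) ^ p :=
    calc sytCard Y n ≤ #(fewLargeWords (Fin n) (d + p) d p) :=
          (Nat.card_le_card_of_injective (fun T => ⟨T.rowWord, hword T⟩)
            fun _ _ h => StandardTableau.rowWord_injective (congrArg Subtype.val h)).trans_eq
            (Nat.card_eq_finsetCard _)
      _ ≤ d ^ n * (n * (d + p) + 1) ^ p := by
          simpa using card_fewLargeWords_le (ι := Fin n) (m := d + p) p hd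
  have hbase : n * (d + p) + 1 ≤ 2 * (d + p) * n := by nlinarith
  rw [Real.rpow_natCast]
  calc (sytCard Y n : ℝ) ≤ ((d ^ n * (n * (d + p) + 1) ^ p : ℕ) : ℝ) := by exact_mod_cast hcount
    _ ≤ ((d ^ n * (2 * (d + p) * n) ^ p : ℕ) : ℝ) := by gcongr
    _ = ((2 * (d + p) : ℕ) : ℝ) ^ p * (n : ℝ) ^ p * (d : ℝ) ^ n := by push_cast; rw [mul_pow]; ring
end
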